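/- arXiv:2105.12004 — 3 statements merged into one kernel-verified Lean document; each statement's English description precedes it below -/
import Mathlib

section
/- Let (M, d) be a metric space, Θ ⊆ M permeable, and (Y, d_Y) a metric space. If f : M → Y is continuous and its restriction to E = M \ Θ is L-Lipschitz with respect to the intrinsic metric ρ_E on E, then f is L-Lipschitz on all of M with respect to the intrinsic metric ρ_M. -/
open Set MeasureTheory ENNReal

section Defs

variable {M : Type*} [MetricSpace M]

/-- `γ` is a path in `E` from `x` to `y` parametrized on `[a,b]`. -/
def IsPathIn (E : Set M) (γ : ℝ → M) (a b : ℝ) (x y : M) : Prop :=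
  a ≤ b ∧ ContinuousOn γ (Set.Icc a b) ∧ γ a = x ∧ γ b = y ∧ ∀ t ∈ Set.Icc a b, γ t ∈ E

/-- Length of a path: total variation over `[a,b]`. -/
noncomputable def pathLength (γ : ℝ → M) (a b : ℝ) : ℝ≥0∞ := eVariationOn γ (Set.Icc a b)

/-- Intrinsic metric on `E`: infimum of lengths of finite-length paths in `E`. -/
noncomputable def intrinsicDist (E : Set M) (x y : M) : ℝ≥0∞ :=
  sInf { L | ∃ γ a b, IsPathIn E γ a b x y ∧ pathLength γ a b < ⊤ ∧ pathLength γ a b = L }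

/-- `Θ`-intrinsic metric relative to ambient set `N`: only paths whose intersection with `Θ`
has countable closure (closure taken in the subspace `N`) are allowed. -/
noncomputable def thetaDistIn (N Θ : Set M) (x y : M) : ℝ≥0∞ :=
  sInf { L | ∃ γ a b, IsPathIn N γ a b x y ∧ pathLength γ a b < ⊤ ∧
    (closure (γ '' Set.Icc a b ∩ Θ) ∩ N).Countable ∧ pathLength γ a b = L }

/-- `Θ`-finite intrinsic metric relative to ambient set `N`: only paths meeting `Θ` in finitely
many points are allowed. -/
noncomputable def thetaFinDistIn (N Θ : Set M) (x y : M) : ℝ≥0∞ :=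
  sInf { L | ∃ γ a b, IsPathIn N γ a b x y ∧ pathLength γ a b < ⊤ ∧
    (γ '' Set.Icc a b ∩ Θ).Finite ∧ pathLength γ a b = L }

/-- `Θ` is permeable relative to `N`. -/
def PermeableIn (N Θ : Set M) : Prop :=
  ∀ x ∈ N, ∀ y ∈ N, thetaDistIn N Θ x y = intrinsicDist N x y

/-- `Θ` is finitely permeable relative to `N`. -/
def FinitelyPermeableIn (N Θ : Set M) : Prop :=
  ∀ x ∈ N, ∀ y ∈ N, thetaFinDistIn N Θ x y = intrinsicDist N x y

/-- `Θ` is permeable (relative to the whole space). -/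
def Permeable (Θ : Set M) : Prop := PermeableIn Set.univ Θ

/-- `Θ` is finitely permeable (relative to the whole space). -/
def FinitelyPermeable (Θ : Set M) : Prop := FinitelyPermeableIn Set.univ Θ

end Defs

/-! Along a path γ : [a,b] → M whose passage through Θ has countable closure D, the times
C = γ⁻¹(D) form a closed set, and on every interval avoiding C the path stays in M \ Θ,
where f is L-Lipschitz for ρ_E. The distances u(t) = d(f(γ a), f(γ t)) fill [0, u b], and,
up to the countable set u(C), every value is attained on a component of the complement of C.
Each component contributes values of measure at most L times the length of γ on it, and
the lengths of disjoint pieces add up to at most the length of γ; hence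
d(f(γ a), f(γ b)) ≤ L · length γ. Permeability lets us take the infimum over such paths. -/

open scoped NNReal

theorem Set.OrdConnected.le_of_disjoint {α : Type*} [LinearOrder α] {K₁ K₂ : Set α}
    (h₁ : K₁.OrdConnected) (h₂ : K₂.OrdConnected) (hd : Disjoint K₁ K₂) {x₁ x₂ y₁ y₂ : α}
    (hx₁ : x₁ ∈ K₁) (hx₂ : x₂ ∈ K₂) (hx : x₁ ≤ x₂) (hy₁ : y₁ ∈ K₁) (hy₂ : y₂ ∈ K₂) :
    y₁ ≤ y₂ := by
  by_contra! hlt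
  rcases le_or_gt x₁ y₂ with h | h
  · exact hd.notMem_of_mem_right hy₂ (h₁.out hx₁ hy₁ ⟨h, hlt.le⟩)
  · exact hd.notMem_of_mem_left hx₁ (h₂.out hy₂ hx₂ ⟨h.le, hx⟩)

namespace eVariationOn

variable {α E : Type*} [LinearOrder α] [PseudoEMetricSpace E]

theorem sum_le_biUnion {ι : Type*} (f : α → E) (K : ι → Set α) (p : ι → α) (s : Finset ι)
    (hp : ∀ i ∈ s, p i ∈ K i) (hK : ∀ i ∈ s, (K i).OrdConnected)
    (hd : (s : Set ι).PairwiseDisjoint K) :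
    ∑ i ∈ s, eVariationOn f (K i) ≤ eVariationOn f (⋃ i ∈ s, K i) := by
  classical
  induction s using Finset.induction_on_max_value p with
  | empty => simp
  | insert j s hj hmax ih =>
    have hjs : j ∈ insert j s := Finset.mem_insert_self j s
    have hsub : ∀ i ∈ s, i ∈ insert j s := fun i => Finset.mem_insert_of_mem
    rw [Finset.sum_insert hj, Finset.set_biUnion_insert, add_comm, union_comm]
    refine (add_le_add_left (ih (fun i hi => hp i (hsub i hi)) (fun i hi => hK i (hsub i hi))
      (hd.subset (by simp))) _).trans (add_le_union f ?_)
    intro x hx y hy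
    obtain ⟨i, hi, hx⟩ := mem_iUnion₂.1 hx
    have hij : i ≠ j := fun h => hj (h ▸ hi)
    exact (hK i (hsub i hi)).le_of_disjoint (hK j hjs) (hd (hsub i hi) hjs hij)
      (hp i (hsub i hi)) (hp j hjs) (hmax i hi) hx hy

theorem tsum_le (f : α → E) {𝒦 : Set (Set α)} {T : Set α} (hd : 𝒦.PairwiseDisjoint id)
    (hK : ∀ K ∈ 𝒦, K.OrdConnected ∧ K.Nonempty) (hT : ∀ K ∈ 𝒦, K ⊆ T) :
    ∑' K : 𝒦, eVariationOn f K ≤ eVariationOn f T := by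
  rw [ENNReal.tsum_eq_iSup_sum]
  refine iSup_le fun s => ?_
  calc ∑ K ∈ s, eVariationOn f K
      ≤ eVariationOn f (⋃ K ∈ s, (K : Set α)) :=
        sum_le_biUnion f (↑) (fun K : 𝒦 => (hK K K.2).2.some) s
          (fun K _ => (hK K K.2).2.some_mem) (fun K _ => (hK K K.2).1)
          fun K _ K' _ hne => hd K.2 K'.2 (Subtype.coe_injective.ne hne)
    _ ≤ eVariationOn f T := mono f (iUnion₂_subset fun K _ => hT K K.2)

end eVariationOn

theorem pairwiseDisjoint_connectedComponentIn_image {X : Type*} [TopologicalSpace X]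
    (F : Set X) : (connectedComponentIn F '' F).PairwiseDisjoint id := by
  rintro _ ⟨x, -, rfl⟩ _ ⟨y, -, rfl⟩ hne
  refine Set.disjoint_left.2 fun z hzx hzy => hne ?_
  rw [connectedComponentIn_eq hzx, connectedComponentIn_eq hzy]

theorem ediam_image_dist_le_mul_eVariationOn {Y E : Type*} [PseudoMetricSpace Y]
    [PseudoEMetricSpace E] {φ : ℝ → Y} {g : ℝ → E} {K : Set ℝ} {L : ℝ≥0} (hK : K.OrdConnected)
    (h : ∀ s ∈ K, ∀ t ∈ K, s ≤ t → edist (φ s) (φ t) ≤ L * eVariationOn g (Icc s t)) (y : Y) :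
    Metric.ediam ((fun t => dist y (φ t)) '' K) ≤ L * eVariationOn g K := by
  have key : ∀ s ∈ K, ∀ t ∈ K, s ≤ t →
      edist (dist y (φ s)) (dist y (φ t)) ≤ L * eVariationOn g K := by
    intro s hs t ht hst
    calc edist (dist y (φ s)) (dist y (φ t)) ≤ edist (φ s) (φ t) := by
          rw [edist_dist, edist_dist]
          exact ENNReal.ofReal_le_ofReal (dist_dist_dist_le_right _ _ _)
      _ ≤ L * eVariationOn g (Icc s t) := h s hs t ht hst
      _ ≤ L * eVariationOn g K := by gcongr; exact eVariationOn.mono g (hK.out hs ht)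
  refine Metric.ediam_le ?_
  rintro _ ⟨s, hs, rfl⟩ _ ⟨t, ht, rfl⟩
  rcases le_total s t with hst | hts
  · exact key s hs t ht hst
  · rw [edist_comm]; exact key t ht s hs hts

theorem Ioo_sdiff_image_subset_biUnion_connectedComponentIn {Y : Type*} [PseudoMetricSpace Y]
    {φ : ℝ → Y} {C : Set ℝ} {a b : ℝ} (hab : a ≤ b) (hφ : ContinuousOn φ (Icc a b)) :
    Ioo 0 (dist (φ a) (φ b)) \ (fun t => dist (φ a) (φ t)) '' C ⊆
      ⋃ K ∈ connectedComponentIn (Ioo a b \ C) '' (Ioo a b \ C),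
        (fun t => dist (φ a) (φ t)) '' K := by
  set u : ℝ → ℝ := fun t => dist (φ a) (φ t)
  rintro v ⟨hv, hvC⟩
  have hua : u a = 0 := dist_self _
  obtain ⟨t, ht, rfl⟩ := intermediate_value_Icc (f := u) hab
    ((continuous_const.dist continuous_id).comp_continuousOn hφ) ⟨hua ▸ hv.1.le, hv.2.le⟩
  have htO : t ∈ Ioo a b \ C := ⟨⟨ht.1.lt_of_ne (by rintro rfl; exact hv.1.ne' hua),
    ht.2.lt_of_ne (by rintro rfl; exact hv.2.ne rfl)⟩, fun htC => hvC ⟨t, htC, rfl⟩⟩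
  exact mem_biUnion ⟨t, htO, rfl⟩ ⟨t, mem_connectedComponentIn htO, rfl⟩

theorem edist_le_mul_eVariationOn_of_countable_image {Y E : Type*} [PseudoMetricSpace Y]
    [PseudoEMetricSpace E] {φ : ℝ → Y} {g : ℝ → E} {C : Set ℝ} {a b : ℝ} {L : ℝ≥0}
    (hab : a ≤ b) (hφ : ContinuousOn φ (Icc a b)) (hC : IsClosed C) (hφC : (φ '' C).Countable)
    (hgap : ∀ s t, s ≤ t → Icc s t ⊆ Ioo a b \ C →
      edist (φ s) (φ t) ≤ L * eVariationOn g (Icc s t)) :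
    edist (φ a) (φ b) ≤ L * eVariationOn g (Icc a b) := by
  set u : ℝ → ℝ := fun t => dist (φ a) (φ t)
  set O := Ioo a b \ C
  set 𝒦 := connectedComponentIn O '' O
  have hO : IsOpen O := isOpen_Ioo.sdiff hC
  have h𝒦 : ∀ K ∈ 𝒦, IsOpen K ∧ K.OrdConnected ∧ K.Nonempty ∧ K ⊆ O := by
    rintro _ ⟨x, hx, rfl⟩
    exact ⟨hO.connectedComponentIn, isPreconnected_connectedComponentIn.ordConnected,
      ⟨x, mem_connectedComponentIn hx⟩, connectedComponentIn_subset O x⟩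
  have hd : 𝒦.PairwiseDisjoint id := pairwiseDisjoint_connectedComponentIn_image O
  have hnull : volume (u '' C) = 0 := by
    rw [← image_image (dist (φ a)) φ]
    exact (hφC.image _).measure_zero _
  calc edist (φ a) (φ b) = volume (Ioo 0 (u b) \ u '' C) := by
        rw [measure_sdiff_null hnull, Real.volume_Ioo, sub_zero, edist_dist]
    _ ≤ ∑' K : 𝒦, volume (u '' K) :=
        (measure_mono (Ioo_sdiff_image_subset_biUnion_connectedComponentIn hab hφ)).trans
          (measure_biUnion_le _ (hd.countable_of_isOpen (fun K hK => (h𝒦 K hK).1)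
            (fun K hK => (h𝒦 K hK).2.2.1)) _)
    _ ≤ ∑' K : 𝒦, L * eVariationOn g K := by
        refine ENNReal.tsum_le_tsum fun K => (Real.volume_le_diam _).trans ?_
        obtain ⟨-, hKc, -, hKO⟩ := h𝒦 K K.2
        exact ediam_image_dist_le_mul_eVariationOn hKc
          (fun s hs t ht hst => hgap s t hst ((hKc.out hs ht).trans hKO)) _
    _ = L * ∑' K : 𝒦, eVariationOn g K := ENNReal.tsum_mul_left
    _ ≤ L * eVariationOn g (Icc a b) := by
        gcongr
        exact eVariationOn.tsum_le g hd (fun K hK => ⟨(h𝒦 K hK).2.1, (h𝒦 K hK).2.2.1⟩)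
          fun K hK => (h𝒦 K hK).2.2.2.trans (sdiff_subset.trans Ioo_subset_Icc_self)

theorem ENNReal.le_coe_mul_sInf {S : Set ℝ≥0∞} (hS : S.Nonempty) {c : ℝ≥0∞} {L : ℝ≥0}
    (h : ∀ l ∈ S, c ≤ L * l) : c ≤ L * sInf S := by
  have := hS.to_subtype
  rw [sInf_eq_iInf', ENNReal.mul_iInf (by simp)]
  exact le_iInf fun l => h l l.2

section Intrinsic

variable {M Y : Type*} [MetricSpace M] [PseudoMetricSpace Y]

theorem intrinsicDist_le_pathLength {E : Set M} {γ : ℝ → M} {a b : ℝ} {x y : M}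
    (hγ : IsPathIn E γ a b x y) (hlen : pathLength γ a b < ⊤) :
    intrinsicDist E x y ≤ pathLength γ a b :=
  sInf_le ⟨γ, a, b, hγ, hlen, rfl⟩

variable {Θ : Set M} {f : M → Y} {L : ℝ≥0}

theorem edist_le_mul_pathLength (hf : Continuous f)
    (hLip : ∀ x ∈ Θᶜ, ∀ y ∈ Θᶜ, intrinsicDist Θᶜ x y < ⊤ →
      edist (f x) (f y) ≤ L * intrinsicDist Θᶜ x y)
    {γ : ℝ → M} {a b : ℝ} {x y : M} (hγ : IsPathIn univ γ a b x y)
    (hlen : pathLength γ a b < ⊤) (hΘ : (closure (γ '' Icc a b ∩ Θ)).Countable) :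
    edist (f x) (f y) ≤ L * pathLength γ a b := by
  obtain ⟨hab, hcont, rfl, rfl, -⟩ := hγ
  set D := closure (γ '' Icc a b ∩ Θ)
  refine edist_le_mul_eVariationOn_of_countable_image (C := Icc a b ∩ γ ⁻¹' D) hab
    (hf.comp_continuousOn hcont)
    (hcont.preimage_isClosed_of_isClosed isClosed_Icc isClosed_closure)
    ((hΘ.image f).mono (by rintro _ ⟨t, ⟨-, ht⟩, rfl⟩; exact mem_image_of_mem f ht))
    fun s t hst hsub => ?_
  have hsab : Icc s t ⊆ Icc a b := fun r hr => Ioo_subset_Icc_self (hsub hr).1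
  have hpath : IsPathIn Θᶜ γ s t (γ s) (γ t) := by
    refine ⟨hst, hcont.mono hsab, rfl, rfl, fun r hr hrΘ => (hsub hr).2 ⟨hsab hr, ?_⟩⟩
    exact subset_closure ⟨mem_image_of_mem γ (hsab hr), hrΘ⟩
  have hlen' : pathLength γ s t < ⊤ := (eVariationOn.mono γ hsab).trans_lt hlen
  have hρ := intrinsicDist_le_pathLength hpath hlen'
  exact (hLip _ (hpath.2.2.2.2 s ⟨le_rfl, hst⟩) _ (hpath.2.2.2.2 t ⟨hst, le_rfl⟩)
    (hρ.trans_lt hlen')).trans (by gcongr; exact hρ)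

theorem edist_le_mul_thetaDistIn (hf : Continuous f)
    (hLip : ∀ x ∈ Θᶜ, ∀ y ∈ Θᶜ, intrinsicDist Θᶜ x y < ⊤ →
      edist (f x) (f y) ≤ L * intrinsicDist Θᶜ x y)
    {x y : M} (hxy : thetaDistIn univ Θ x y < ⊤) :
    edist (f x) (f y) ≤ L * thetaDistIn univ Θ x y := by
  refine ENNReal.le_coe_mul_sInf
    (nonempty_iff_ne_empty.2 fun hS => hxy.ne (by rw [thetaDistIn, hS, sInf_empty])) ?_
  rintro _ ⟨γ, a, b, hγ, hlen, hΘ, rfl⟩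
  exact edist_le_mul_pathLength hf hLip hγ hlen (by rwa [inter_univ] at hΘ)

end Intrinsic

/-- Theorem (main): if `Θ` is permeable and `f` is continuous on `M` and intrinsically
`L`-Lipschitz on `E = M \ Θ`, then `f` is intrinsically `L`-Lipschitz on all of `M`. -/
theorem stmt6 {M Y : Type*} [MetricSpace M] [MetricSpace Y]
    (Θ : Set M) (hΘ : Permeable Θ) (f : M → Y) (hf : Continuous f) (L : NNReal)
    (hLip : ∀ x ∈ Θᶜ, ∀ y ∈ Θᶜ, intrinsicDist Θᶜ x y < ⊤ →
      edist (f x) (f y) ≤ L * intrinsicDist Θᶜ x y) :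
    ∀ x y : M, intrinsicDist Set.univ x y < ⊤ →
      edist (f x) (f y) ≤ L * intrinsicDist Set.univ x y := by
  intro x y hxy
  rw [← hΘ x (mem_univ x) y (mem_univ y)] at hxy ⊢
  exact edist_le_mul_thetaDistIn hf hLip hxy
end

section
/- Let Θ ⊆ ℝ have uncountable closure. Then there exists a continuous function f : ℝ → ℝ which is constant on every connected component of ℝ \ closure(Θ) (hence is 0-Lipschitz with respect to the intrinsic metric on ℝ \ closure(Θ)), but f is not Lipschitz continuous on ℝ. -/
open Set MeasureTheory ENNReal

open Filter Topology Asymptotics ProbabilityTheory NNReal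

/-!
`C = closure Θ` is an uncountable standard Borel space, hence Borel isomorphic to `[0, 1]`;
pushing Lebesgue measure forward gives an atomless probability measure `ν` concentrated on `C`.
Its distribution function `F` is continuous and constant on every gap of `C`. If `F` is not
Lipschitz we are done. Otherwise `F` is absolutely continuous and nonconstant, so `F' x₀ ≠ 0` at
some point `x₀`. Then `√|F - F x₀|` is still constant on the gaps of `C`, but it is not Lipschitz:
a Lipschitz bound would give `|F x - F x₀| = O((x - x₀)²)`, i.e. `F' x₀ = 0`.
-/

theorem exists_isProbabilityMeasure_nullSingletonClass_of_not_countable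
    {α : Type*} [MeasurableSpace α] [StandardBorelSpace α] {C : Set α}
    (hC : MeasurableSet C) (h : ¬ C.Countable) :
    ∃ ν : Measure α, IsProbabilityMeasure ν ∧ NullSingletonClass ν ∧ ν Cᶜ = 0 := by
  have := hC.standardBorel
  have hI : ¬ Countable unitInterval := fun _ => by
    simpa using (countable_univ (α := unitInterval)).measure_zero volume
  let g : unitInterval → α :=
    (↑) ∘ PolishSpace.measurableEquivOfNotCountable hI (countable_coe_iff.not.mpr h)
  have hg : MeasurableEmbedding g :=
    (MeasurableEmbedding.subtype_coe hC).comp (MeasurableEquiv.measurableEmbedding _)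
  refine ⟨volume.map g, Measure.isProbabilityMeasure_map hg.measurable.aemeasurable,
    ⟨fun x => ?_⟩, ?_⟩
  · rw [hg.map_apply]
    exact Subsingleton.measure_zero (fun a ha b hb => hg.injective (ha.trans hb.symm)) _
  · have hgC : g ⁻¹' C = univ := eq_univ_of_forall fun t => Subtype.prop _
    rw [hg.map_apply, preimage_compl, hgC, compl_univ, measure_empty]

theorem StieltjesFunction.continuous_of_nullSingletonClass (f : StieltjesFunction ℝ)
    [NullSingletonClass f.measure] : Continuous f :=
  continuous_iff_continuousAt.2 fun x => by
    rw [f.mono.continuousAt_iff_leftLim_eq_rightLim, f.rightLim_eq]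
    have h : f.measure {x} = 0 := MeasureTheory.measure_singleton x
    rw [f.measure_singleton, ENNReal.ofReal_eq_zero] at h
    exact le_antisymm (f.mono.leftLim_le le_rfl) (by linarith)

theorem StieltjesFunction.eq_of_mem_connectedComponentIn (f : StieltjesFunction ℝ) {U : Set ℝ}
    (hU : f.measure U = 0) {x y : ℝ} (hy : y ∈ connectedComponentIn U x) : f y = f x := by
  set S := connectedComponentIn U x
  have hx : x ∈ S := mem_connectedComponentIn (connectedComponentIn_nonempty_iff.1 ⟨y, hy⟩)
  have hS : OrdConnected S := isPreconnected_connectedComponentIn.ordConnected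
  have key : ∀ a ∈ S, ∀ b ∈ S, a ≤ b → f b = f a := by
    intro a ha b hb hab
    have h0 : f.measure (Ioc a b) = 0 := measure_mono_null
      (Ioc_subset_Icc_self.trans ((hS.out ha hb).trans (connectedComponentIn_subset _ _))) hU
    rw [f.measure_Ioc, ENNReal.ofReal_eq_zero, sub_nonpos] at h0
    exact le_antisymm h0 (f.mono hab)
  rcases le_total x y with hxy | hyx
  · exact key x hx y hy hxy
  · exact (key y hy x hx hyx).symm

theorem ProbabilityTheory.exists_cdf_ne (μ : Measure ℝ) : ∃ a b, cdf μ a ≠ cdf μ b := by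
  by_contra! h
  have h0 := tendsto_const_nhds_iff.1 ((tendsto_cdf_atBot μ).congr fun x => h x 0)
  have h1 := tendsto_const_nhds_iff.1 ((tendsto_cdf_atTop μ).congr fun x => h x 0)
  exact zero_ne_one (h0.symm.trans h1)

theorem LipschitzWith.exists_hasDerivAt_ne_zero {V : Type*} [NormedAddCommGroup V]
    [NormedSpace ℝ V] [FiniteDimensional ℝ V] {F : ℝ → V} {K : ℝ≥0}
    (hF : LipschitzWith K F) {a b : ℝ} (hab : F a ≠ F b) : ∃ x d, HasDerivAt F d x ∧ d ≠ 0 := by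
  by_contra! h
  have hderiv : ∀ᵐ x, x ∈ uIcc a b → HasDerivAt F 0 x := by
    filter_upwards [hF.ae_differentiableAt_real] with x hx _
    simpa [h x _ hx.hasDerivAt] using hx.hasDerivAt
  obtain ⟨c, hc⟩ := hF.lipschitzOnWith.absolutelyContinuousOnInterval.const_of_ae_hasDerivAt_zero
    hderiv
  exact hab ((hc a left_mem_uIcc).trans (hc b right_mem_uIcc).symm)

theorem hasDerivAt_zero_of_lipschitzWith_sqrt_abs_sub {F : ℝ → ℝ} {x₀ : ℝ} {K : ℝ≥0}
    (hK : LipschitzWith K fun x => √|F x - F x₀|) : HasDerivAt F 0 x₀ := by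
  have hbound (x : ℝ) : ‖F x - F x₀‖ ≤ K ^ 2 * ‖x - x₀‖ ^ 2 := by
    have h := hK.dist_le_mul x x₀
    simp only [Real.dist_eq, sub_self, abs_zero, Real.sqrt_zero, sub_zero,
      abs_of_nonneg (Real.sqrt_nonneg _), Real.sqrt_le_iff] at h
    simpa [mul_pow] using h.2
  have hO : (fun x => F x - F x₀) =O[𝓝 x₀] fun x => ‖x - x₀‖ ^ 2 :=
    IsBigO.of_bound _ (Eventually.of_forall fun x => by simpa using hbound x)
  simpa using (hO.hasFDerivAt one_lt_two).hasDerivAt.add_const (F x₀)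

/-- If `Θ ⊆ ℝ` has uncountable closure, there is a continuous function which is constant on
every connected component of the complement of the closure of `Θ` but not Lipschitz. -/
theorem stmt11 (Θ : Set ℝ) (h : ¬ (closure Θ).Countable) :
    ∃ f : ℝ → ℝ, Continuous f ∧
      (∀ x ∈ (closure Θ)ᶜ, ∀ y ∈ connectedComponentIn (closure Θ)ᶜ x, f y = f x) ∧
      ¬ ∃ L : NNReal, LipschitzWith L f := by
  obtain ⟨ν, _, _, hν⟩ :=
    exists_isProbabilityMeasure_nullSingletonClass_of_not_countable isClosed_closure.measurableSet h
  have : NullSingletonClass (cdf ν).measure := by rwa [measure_cdf]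
  have hcont : Continuous (cdf ν) := (cdf ν).continuous_of_nullSingletonClass
  have hconst (x y : ℝ) (hy : y ∈ connectedComponentIn (closure Θ)ᶜ x) :
      cdf ν y = cdf ν x :=
    (cdf ν).eq_of_mem_connectedComponentIn (by rwa [measure_cdf]) hy
  by_cases hLip : ∃ L : NNReal, LipschitzWith L (cdf ν)
  · obtain ⟨L, hL⟩ := hLip
    obtain ⟨a, b, hab⟩ := exists_cdf_ne ν
    obtain ⟨x₀, d, hd, hd0⟩ := hL.exists_hasDerivAt_ne_zero hab
    refine ⟨fun x => √|cdf ν x - cdf ν x₀|, (hcont.sub continuous_const).abs.sqrt,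
      fun x _ y hy => congrArg (fun t => √|t - cdf ν x₀|) (hconst x y hy), ?_⟩
    rintro ⟨K, hK⟩
    exact hd0 (hd.unique (hasDerivAt_zero_of_lipschitzWith_sqrt_abs_sub hK))
  · exact ⟨cdf ν, hcont, fun x _ y hy => hconst x y hy, hLip⟩
end

section
/- Let Θ := { (t, sin(1/t)) : t ∈ (0, ∞) } ⊆ ℝ² (the topologist's sine curve). Then Θ is permeable in ℝ², but Θ is not finitely permeable: for x = (0,0) and y = (1,0), every path in ℝ² from x to y having finite intersection with Θ has length at least 2, while ‖x − y‖ = 1. -/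
open Set MeasureTheory ENNReal

/-!
Straight segments realise the euclidean distance, and a segment meets `Θ` in a countable set:
along a non-vertical line the meeting points are zeros of the analytic function
`t ↦ sin (1 / t) - (m * t + c)` on `(0, ∞)`, which is not identically zero, and taking the closure
only adds points of the `y`-axis, of which a non-vertical segment has at most one. Hence `Θ` is
permeable.

Now let a path from `(0, 0)` to `(1, 0)` meet `Θ` in finitely many points, all with abscissa
`> ε`. Between its last visit to the `y`-axis and its next visit to the line `x = ε` it sweeps out
the strip `0 < x < ε` without meeting `Θ`, so it stays on one side of the curve; as `sin (1 / x)`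
takes both values `±1` in that strip, the path reaches height `|y| ≥ 1`, and its length is at
least `1 + 1`.
-/

open AffineMap

section Paths

variable {M : Type*} [MetricSpace M]

theorem IsPathIn.edist_le_pathLength {E : Set M} {γ : ℝ → M} {a b : ℝ} {x y : M}
    (hγ : IsPathIn E γ a b x y) : edist x y ≤ pathLength γ a b := by
  obtain ⟨hab, -, rfl, rfl, -⟩ := hγ
  exact eVariationOn.edist_le γ (left_mem_Icc.2 hab) (right_mem_Icc.2 hab)

theorem edist_add_edist_le_pathLength (γ : ℝ → M) {a b t : ℝ} (ht : t ∈ Icc a b) :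
    edist (γ a) (γ t) + edist (γ t) (γ b) ≤ pathLength γ a b := by
  have hsplit := eVariationOn.Icc_add_Icc γ ht.1 ht.2 (s := univ) (mem_univ t)
  simp only [univ_inter] at hsplit
  rw [pathLength, ← hsplit]
  gcongr
  · exact eVariationOn.edist_le γ (left_mem_Icc.2 ht.1) (right_mem_Icc.2 ht.1)
  · exact eVariationOn.edist_le γ (left_mem_Icc.2 ht.2) (right_mem_Icc.2 ht.2)

end Paths

section Segments

variable {V : Type*} [NormedAddCommGroup V] [NormedSpace ℝ V]

theorem isPathIn_lineMap (x y : V) : IsPathIn univ (lineMap x y : ℝ → V) 0 1 x y :=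
  ⟨zero_le_one, (lineMap_continuous (R := ℝ)).continuousOn, lineMap_apply_zero x y,
    lineMap_apply_one x y, fun _ _ => mem_univ _⟩

theorem pathLength_lineMap (x y : V) : pathLength (lineMap x y : ℝ → V) 0 1 = edist x y := by
  refine le_antisymm ?_ (isPathIn_lineMap x y).edist_le_pathLength
  have h := ((lipschitzWith_lineMap (𝕜 := ℝ) x y).lipschitzOnWith (s := univ)).comp_eVariationOn_le
    (mapsTo_univ id (Icc (0 : ℝ) 1))
  rwa [eVariationOn_id_Icc, sub_zero, ofReal_one, mul_one, ← edist_nndist] at h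

theorem intrinsicDist_univ (x y : V) : intrinsicDist univ x y = edist x y := by
  refine le_antisymm ?_ (le_sInf ?_)
  · calc intrinsicDist univ x y ≤ pathLength (lineMap x y) 0 1 :=
          sInf_le ⟨_, 0, 1, isPathIn_lineMap x y, by simp [pathLength_lineMap, edist_lt_top], rfl⟩
      _ = edist x y := pathLength_lineMap x y
  · rintro L ⟨γ, a, b, hγ, -, rfl⟩
    exact hγ.edist_le_pathLength

theorem permeable_of_countable_closure_segment_inter {Θ : Set V}
    (hΘ : ∀ x y : V, (closure (segment ℝ x y ∩ Θ)).Countable) : Permeable Θ := by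
  intro x _ y _
  rw [intrinsicDist_univ]
  refine le_antisymm ?_ (le_sInf ?_)
  · calc thetaDistIn univ Θ x y ≤ pathLength (lineMap x y) 0 1 :=
          sInf_le ⟨_, 0, 1, isPathIn_lineMap x y, by simp [pathLength_lineMap, edist_lt_top],
            by rw [inter_univ, ← segment_eq_image_lineMap]; exact hΘ x y, rfl⟩
      _ = edist x y := pathLength_lineMap x y
  · rintro L ⟨γ, a, b, hγ, -, -, rfl⟩
    exact hγ.edist_le_pathLength

theorem isClosed_segment (x y : V) : IsClosed (segment ℝ x y) := by
  rw [segment_eq_image_lineMap]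
  exact (isCompact_Icc.image lineMap_continuous).isClosed

end Segments

theorem EuclideanSpace.exists_apply_eq_of_mem_segment {ι : Type*} {x y p : EuclideanSpace ℝ ι}
    (hp : p ∈ segment ℝ x y) : ∃ θ : ℝ, ∀ i, p i = x i + θ * (y i - x i) := by
  obtain ⟨a, b, -, -, hab, rfl⟩ := hp
  refine ⟨b, fun i => ?_⟩
  simp only [PiLp.add_apply, PiLp.smul_apply, smul_eq_mul]
  linear_combination x i * hab

theorem EuclideanSpace.subsingleton_segment_inter_setOf_apply_eq {ι : Type*}
    {x y : EuclideanSpace ℝ ι} {i : ι} (hxy : x i ≠ y i) (c : ℝ) :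
    (segment ℝ x y ∩ {p | p i = c}).Subsingleton := by
  rintro p ⟨hp, hpc : p i = c⟩ q ⟨hq, hqc : q i = c⟩
  obtain ⟨θ, hθ⟩ := exists_apply_eq_of_mem_segment hp
  obtain ⟨θ', hθ'⟩ := exists_apply_eq_of_mem_segment hq
  have : θ = θ' := mul_right_cancel₀ (sub_ne_zero.2 hxy.symm) <| by
    linear_combination hθ' i - hθ i + hpc - hqc
  ext j
  rw [hθ j, hθ' j, this]

theorem AnalyticOnNhd.countable_preimage_zero_inter {𝕜 E : Type*} [NontriviallyNormedField 𝕜]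
    [SecondCountableTopology 𝕜] [NormedAddCommGroup E] [NormedSpace 𝕜 E] {f : 𝕜 → E}
    {U : Set 𝕜} {x : 𝕜} (hf : AnalyticOnNhd 𝕜 f U) (hU : IsConnected U) (hx : x ∈ U)
    (hfx : f x ≠ 0) : (f ⁻¹' {0} ∩ U).Countable := by
  refine (HereditarilyLindelofSpace.isLindelof _).countable_of_isDiscrete
    (isDiscrete_of_codiscreteWithin ?_)
  simpa only [preimage_compl] using hf.preimage_zero_mem_codiscreteWithin hfx hx hU

section Crossing

variable {α δ : Type*} [ConditionallyCompleteLinearOrder α] [TopologicalSpace α] [OrderTopology α]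
  [DenselyOrdered α] [LinearOrder δ] [TopologicalSpace δ] [OrderClosedTopology δ]
  {f : α → δ} {a b : α} {c d : δ}

theorem ContinuousOn.exists_last_eq (hab : a ≤ b) (hf : ContinuousOn f (Icc a b)) (ha : f a ≤ c)
    (hb : c < f b) : ∃ s ∈ Icc a b, f s = c ∧ ∀ t ∈ Ioc s b, c < f t := by
  have hK : IsCompact (Icc a b ∩ f ⁻¹' {c}) := isCompact_Icc.of_isClosed_subset
    (hf.preimage_isClosed_of_isClosed isClosed_Icc isClosed_singleton) inter_subset_left
  obtain ⟨s, ⟨hs, hfs⟩, hlast⟩ := hK.exists_isGreatest <|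
    intermediate_value_Icc hab hf ⟨ha, hb.le⟩
  refine ⟨s, hs, hfs, fun t ht => not_le.1 fun hft => ?_⟩
  obtain ⟨r, hr, hfr⟩ := intermediate_value_Icc ht.2
    (hf.mono (Icc_subset_Icc (hs.1.trans ht.1.le) le_rfl)) ⟨hft, hb.le⟩
  exact (hlast ⟨⟨hs.1.trans (ht.1.le.trans hr.1), hr.2⟩, hfr⟩).not_gt (ht.1.trans_le hr.1)

theorem ContinuousOn.exists_first_eq (hab : a ≤ b) (hf : ContinuousOn f (Icc a b))
    (ha : f a < d) (hb : d ≤ f b) : ∃ u ∈ Icc a b, f u = d ∧ ∀ t ∈ Ico a u, f t < d := by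
  have hK : IsCompact (Icc a b ∩ f ⁻¹' {d}) := isCompact_Icc.of_isClosed_subset
    (hf.preimage_isClosed_of_isClosed isClosed_Icc isClosed_singleton) inter_subset_left
  obtain ⟨u, ⟨hu, hfu⟩, hfirst⟩ := hK.exists_isLeast <| intermediate_value_Icc hab hf ⟨ha.le, hb⟩
  refine ⟨u, hu, hfu, fun t ht => not_le.1 fun hft => ?_⟩
  obtain ⟨r, hr, hfr⟩ := intermediate_value_Icc ht.1
    (hf.mono (Icc_subset_Icc le_rfl (ht.2.le.trans hu.2))) ⟨ha.le, hft⟩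
  exact (hfirst ⟨⟨hr.1, hr.2.trans (ht.2.le.trans hu.2)⟩, hfr⟩).not_gt (hr.2.trans_lt ht.2)

theorem ContinuousOn.exists_image_Ioo_eq_Ioo (hab : a ≤ b) (hf : ContinuousOn f (Icc a b))
    (ha : f a ≤ c) (hcd : c < d) (hb : d ≤ f b) :
    ∃ s u, Icc s u ⊆ Icc a b ∧ f '' Ioo s u = Ioo c d := by
  obtain ⟨s, hs, hfs, hgt⟩ := hf.exists_last_eq hab ha (hcd.trans_le hb)
  obtain ⟨u, hu, hfu, hlt⟩ := (hf.mono (Icc_subset_Icc hs.1 le_rfl)).exists_first_eq hs.2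
    (hfs ▸ hcd) hb
  refine ⟨s, u, Icc_subset_Icc hs.1 hu.2, Subset.antisymm ?_ ?_⟩
  · rintro _ ⟨t, ht, rfl⟩
    exact ⟨hgt t ⟨ht.1, ht.2.le.trans hu.2⟩, hlt t ⟨ht.1.le, ht.2⟩⟩
  · rw [← hfs, ← hfu]
    exact intermediate_value_Ioo hu.1 (hf.mono (Icc_subset_Icc hs.1 hu.2))

end Crossing

section SineCurve

open Real

def sineCurve : Set (EuclideanSpace ℝ (Fin 2)) := {p | 0 < p 0 ∧ p 1 = sin (1 / p 0)}

theorem countable_setOf_sin_inv_eq_affine (m c : ℝ) :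
    {t : ℝ | 0 < t ∧ sin (1 / t) = m * t + c}.Countable := by
  set f : ℝ → ℝ := fun t => sin (1 / t) - (m * t + c)
  have hf : AnalyticOnNhd ℝ f (Ioi 0) := fun t ht => by
    have : t ≠ 0 := ne_of_gt ht
    fun_prop (disch := assumption)
  obtain ⟨t, ht, hft⟩ : ∃ t ∈ Ioi (0 : ℝ), f t ≠ 0 := by
    by_contra! h
    have h1 := h π⁻¹ (mem_Ioi.2 (by positivity))
    have h2 := h (2 * π)⁻¹ (mem_Ioi.2 (by positivity))
    have h3 := h (2 / π) (mem_Ioi.2 (by positivity))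
    simp only [f, one_div, inv_inv, sin_pi, sin_two_pi, inv_div, sin_pi_div_two] at h1 h2 h3
    field_simp at h1 h2 h3
    linarith [pi_pos]
  refine (hf.countable_preimage_zero_inter isConnected_Ioi ht hft).mono ?_
  rintro s ⟨hs, hsin⟩
  exact ⟨sub_eq_zero.2 hsin, hs⟩

theorem eq_of_mem_sineCurve {p q : EuclideanSpace ℝ (Fin 2)} (hp : p ∈ sineCurve)
    (hq : q ∈ sineCurve) (h : p 0 = q 0) : p = q := by
  ext i
  fin_cases i
  · exact h
  · simp [hp.2, hq.2, h]

theorem closure_sineCurve_subset : closure sineCurve ⊆ sineCurve ∪ {p | p 0 = 0} := by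
  set g : EuclideanSpace ℝ (Fin 2) → ℝ := fun p => p 1 - sin (1 / p 0)
  have hopen : IsOpen ({p | 0 < p 0} ∩ g ⁻¹' {0}ᶜ) := by
    refine ContinuousOn.isOpen_inter_preimage ?_ (isOpen_lt continuous_const (by fun_prop))
      isOpen_compl_singleton
    exact ContinuousOn.sub (by fun_prop) (continuous_sin.comp_continuousOn
      (continuousOn_const.div (by fun_prop) fun p (h : 0 < p 0) => h.ne'))
  have hclosed : IsClosed ({p | 0 ≤ p 0} ∩ ({p | 0 < p 0} ∩ g ⁻¹' {0}ᶜ)ᶜ) :=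
    (isClosed_le continuous_const (by fun_prop)).inter hopen.isClosed_compl
  have hsub : sineCurve ⊆ {p | 0 ≤ p 0} ∩ ({p | 0 < p 0} ∩ g ⁻¹' {0}ᶜ)ᶜ :=
    fun q hq => ⟨hq.1.le, fun h => h.2 (sub_eq_zero.2 hq.2)⟩
  intro p hp
  obtain ⟨hp0 : 0 ≤ p 0, hpg⟩ := closure_minimal hsub hclosed hp
  rcases hp0.eq_or_lt with h | h
  · exact Or.inr h.symm
  · exact Or.inl ⟨h, sub_eq_zero.1 (not_not.1 fun hne => hpg ⟨h, hne⟩)⟩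

theorem countable_segment_inter_sineCurve {x y : EuclideanSpace ℝ (Fin 2)} (hxy : x 0 ≠ y 0) :
    (segment ℝ x y ∩ sineCurve).Countable := by
  set m := (y 1 - x 1) / (y 0 - x 0)
  have hline : ∀ p ∈ segment ℝ x y, p 1 = m * p 0 + (x 1 - m * x 0) := by
    intro p hp
    obtain ⟨θ, hθ⟩ := EuclideanSpace.exists_apply_eq_of_mem_segment hp
    have hm : m * (y 0 - x 0) = y 1 - x 1 := div_mul_cancel₀ _ (sub_ne_zero.2 hxy.symm)
    rw [hθ 0, hθ 1]
    linear_combination (-θ) * hm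
  refine MapsTo.countable_of_injOn (f := fun p => p 0) ?_ ?_
    (countable_setOf_sin_inv_eq_affine m (x 1 - m * x 0))
  · rintro p ⟨hp, hp0, hp1⟩
    exact ⟨hp0, hp1 ▸ hline p hp⟩
  · rintro p ⟨-, hp⟩ q ⟨-, hq⟩ h
    exact eq_of_mem_sineCurve hp hq h

theorem countable_closure_segment_inter_sineCurve (x y : EuclideanSpace ℝ (Fin 2)) :
    (closure (segment ℝ x y ∩ sineCurve)).Countable := by
  rcases eq_or_ne (x 0) (y 0) with hxy | hxy
  · refine (Subsingleton.closure ?_).countable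
    rintro p ⟨hp, hpS⟩ q ⟨hq, hqS⟩
    obtain ⟨θ, hθ⟩ := EuclideanSpace.exists_apply_eq_of_mem_segment hp
    obtain ⟨θ', hθ'⟩ := EuclideanSpace.exists_apply_eq_of_mem_segment hq
    exact eq_of_mem_sineCurve hpS hqS (by rw [hθ, hθ', hxy]; ring)
  · have hsub : closure (segment ℝ x y ∩ sineCurve) ⊆
        segment ℝ x y ∩ sineCurve ∪ segment ℝ x y ∩ {p | p 0 = 0} := by
      refine (closure_inter_subset_inter_closure _ _).trans ?_
      rw [(isClosed_segment x y).closure_eq, ← inter_union_distrib_left]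
      exact inter_subset_inter_right _ closure_sineCurve_subset
    exact ((countable_segment_inter_sineCurve hxy).union
      (EuclideanSpace.subsingleton_segment_inter_setOf_apply_eq hxy 0).countable).mono hsub

theorem exists_mem_Ioo_sin_inv_eq {ε y : ℝ} (hε : 0 < ε) (hy : y ∈ Icc (-1) 1) :
    ∃ v ∈ Ioo 0 ε, sin (1 / v) = y := by
  obtain ⟨n, hn⟩ := exists_nat_gt (1 / ε + π / 2)
  have hw : 1 / ε < arcsin y + n * (2 * π) := by
    nlinarith [neg_pi_div_two_le_arcsin y, pi_gt_three, n.cast_nonneg (α := ℝ)]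
  have hw0 : 0 < arcsin y + n * (2 * π) := (one_div_pos.2 hε).trans hw
  refine ⟨1 / (arcsin y + n * (2 * π)), ⟨one_div_pos.2 hw0, ?_⟩, ?_⟩
  · rwa [one_div_lt hw0 hε]
  · rw [one_div_one_div, sin_add_nat_mul_two_pi, sin_arcsin hy.1 hy.2]

theorem exists_one_le_abs_of_finite_inter_sineCurve {γ : ℝ → EuclideanSpace ℝ (Fin 2)}
    {a b : ℝ} (hab : a ≤ b) (hγ : ContinuousOn γ (Icc a b)) (ha : γ a 0 ≤ 0) (hb : 0 < γ b 0)
    (hfin : (γ '' Icc a b ∩ sineCurve).Finite) : ∃ t ∈ Icc a b, 1 ≤ |γ t 1| := by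
  obtain ⟨ε, hε0, hε⟩ : ∃ ε, 0 < ε ∧ ∀ x ∈ insert (γ b 0) ((· 0) '' (γ '' Icc a b ∩ sineCurve)),
      ε < x := by
    simpa using (finite_singleton 0).exists_between (singleton_nonempty 0)
      ((hfin.image (· 0)).insert (γ b 0)) (insert_nonempty _ _)
      (by rintro _ rfl _ (rfl | ⟨p, ⟨-, hp⟩, rfl⟩); exacts [hb, hp.1])
  have hX : ContinuousOn (fun t => γ t 0) (Icc a b) := by fun_prop
  obtain ⟨s, u, hsub, himage⟩ := hX.exists_image_Ioo_eq_Ioo hab ha hε0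
    (hε _ (mem_insert _ _)).le
  have hJ : Ioo s u ⊆ Icc a b := Ioo_subset_Icc_self.trans hsub
  have hstrip : ∀ t ∈ Ioo s u, 0 < γ t 0 ∧ γ t 0 < ε := fun t ht =>
    himage.subset (mem_image_of_mem _ ht)
  set g : ℝ → ℝ := fun t => γ t 1 - sin (1 / γ t 0)
  have hg : ContinuousOn g (Ioo s u) := ContinuousOn.sub
    ((by fun_prop : ContinuousOn (fun t => γ t 1) (Icc a b)).mono hJ)
    (continuous_sin.comp_continuousOn (continuousOn_const.div (hX.mono hJ)
      fun t ht => (hstrip t ht).1.ne'))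
  have hg0 : ∀ t ∈ Ioo s u, g t ≠ 0 := fun t ht hgt =>
    (hε _ (mem_insert_of_mem _ ⟨γ t, ⟨mem_image_of_mem _ (hJ ht),
      (hstrip t ht).1, sub_eq_zero.1 hgt⟩, rfl⟩)).not_gt (hstrip t ht).2
  have hsweep : ∀ y ∈ Icc (-1 : ℝ) 1, ∃ t ∈ Ioo s u, sin (1 / γ t 0) = y := fun y hy => by
    obtain ⟨v, hv, hsin⟩ := exists_mem_Ioo_sin_inv_eq hε0 hy
    obtain ⟨t, ht, rfl⟩ := himage.symm.subset hv
    exact ⟨t, ht, hsin⟩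
  rcases isPreconnected_Ioo.mapsTo_Ioi_or_Iio hg hg0 with hpos | hneg
  · obtain ⟨t, ht, hsin⟩ := hsweep 1 (by norm_num)
    have : 0 < g t := hpos ht
    exact ⟨t, hJ ht, le_abs.2 (Or.inl (by simp only [g, hsin] at this; linarith))⟩
  · obtain ⟨t, ht, hsin⟩ := hsweep (-1) (by norm_num)
    have : g t < 0 := hneg ht
    exact ⟨t, hJ ht, le_abs.2 (Or.inr (by simp only [g, hsin] at this; linarith))⟩

theorem two_le_pathLength_of_finite_inter_sineCurve {γ : ℝ → EuclideanSpace ℝ (Fin 2)}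
    {a b : ℝ} (hγ : IsPathIn univ γ a b !₂[0, 0] !₂[1, 0])
    (hfin : (γ '' Icc a b ∩ sineCurve).Finite) : ENNReal.ofReal 2 ≤ pathLength γ a b := by
  obtain ⟨hab, hcont, hγa, hγb, -⟩ := hγ
  obtain ⟨t, ht, hγt⟩ := exists_one_le_abs_of_finite_inter_sineCurve hab hcont
    (by simp [hγa]) (by simp [hγb]) hfin
  have hleg : ∀ p q : EuclideanSpace ℝ (Fin 2), p 1 = 0 → 1 ≤ |q 1| →
      ENNReal.ofReal 1 ≤ edist p q := fun p q hp hq => by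
    refine le_trans ?_ (PiLp.edist_apply_le p q 1)
    rw [edist_dist, Real.dist_eq, hp, zero_sub, abs_neg]
    exact ofReal_le_ofReal hq
  calc ENNReal.ofReal 2 = ENNReal.ofReal 1 + ENNReal.ofReal 1 := by
        rw [← ofReal_add zero_le_one zero_le_one]; norm_num
    _ ≤ edist (γ a) (γ t) + edist (γ t) (γ b) := by
        gcongr
        · exact hleg _ _ (by simp [hγa]) hγt
        · rw [edist_comm]; exact hleg _ _ (by simp [hγb]) hγt
    _ ≤ pathLength γ a b := edist_add_edist_le_pathLength γ ht

end SineCurve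

/-- The topologist's sine curve `Θ = {(t, sin(1/t)) : t > 0}` is permeable in `ℝ²` but not
finitely permeable: every path from `(0,0)` to `(1,0)` meeting `Θ` in finitely many points has
length at least `2`, although `‖x - y‖ = 1`. -/
theorem stmt18
    (Θ : Set (EuclideanSpace ℝ (Fin 2)))
    (hΘ : Θ = {p | 0 < p 0 ∧ p 1 = Real.sin (1 / p 0)})
    (x y : EuclideanSpace ℝ (Fin 2)) (hx : x = !₂[0, 0]) (hy : y = !₂[1, 0]) :
    Permeable Θ ∧
    ¬ FinitelyPermeable Θ ∧
    ‖x - y‖ = 1 ∧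
    ∀ (γ : ℝ → EuclideanSpace ℝ (Fin 2)) (a b : ℝ),
      IsPathIn Set.univ γ a b x y → (γ '' Set.Icc a b ∩ Θ).Finite →
        ENNReal.ofReal 2 ≤ pathLength γ a b := by
  obtain rfl : Θ = sineCurve := hΘ
  subst hx hy
  have hnorm : ‖(!₂[0, 0] - !₂[1, 0] : EuclideanSpace ℝ (Fin 2))‖ = 1 := by
    simp [EuclideanSpace.norm_eq]
  refine ⟨permeable_of_countable_closure_segment_inter countable_closure_segment_inter_sineCurve,
    fun h => ?_, hnorm, fun γ a b => two_le_pathLength_of_finite_inter_sineCurve⟩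
  have h2 : ENNReal.ofReal 2 ≤ thetaFinDistIn univ sineCurve !₂[0, 0] !₂[1, 0] := by
    refine le_sInf ?_
    rintro _ ⟨γ, a, b, hγ, -, hfin, rfl⟩
    exact two_le_pathLength_of_finite_inter_sineCurve hγ hfin
  rw [h _ trivial _ trivial, intrinsicDist_univ, edist_dist, dist_eq_norm, hnorm,
    ofReal_le_ofReal_iff zero_le_one] at h2
  norm_num at h2
end
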